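/- Let V : ℤ^d → ℂ be Γ-periodic and suppose V̂(l) = 0 for every l in the fundamental domain W with l_s ≠ 0 and l_t ≠ 0, where 1 ≤ s < t ≤ d. Then there exist functions V_s, V_t on ℤ^{d-1} such that V(n) = V_s(n₁,…,n_{t-1},n_{t+1},…,n_d) + V_t(n₁,…,n_{s-1},n_{s+1},…,n_d) for all n ∈ ℤ^d. -/

import Mathlib

open scoped BigOperators

/-- Discrete Fourier transform over the fundamental domain `W = ∏ [0, qⱼ-1]`. -/
noncomputable def dft {d : ℕ} (q : Fin d → ℕ) (V : (Fin d → ℤ) → ℂ)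
    (l : Fin d → ℤ) : ℂ :=
  (1 / ∏ j, (q j : ℂ)) *
    ∑ n : (∀ j, Fin (q j)), V (fun j => ((n j : ℕ) : ℤ)) *
      Complex.exp (-(2 * Real.pi * Complex.I) *
        ∑ j, (l j : ℂ) * ((n j : ℕ) : ℂ) / (q j : ℂ))

/-- The average `[V]` of `V` over the periodicity cell. -/
noncomputable def avgW {d : ℕ} (q : Fin d → ℕ) (V : (Fin d → ℤ) → ℂ) : ℂ :=
  (1 / ∏ j, (q j : ℂ)) * ∑ n : (∀ j, Fin (q j)), V (fun j => ((n j : ℕ) : ℤ))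

/-- `Γ`-periodicity for `Γ = q₁ℤ ⊕ ⋯ ⊕ q_dℤ`. -/
def IsPeriodic {d : ℕ} (q : Fin d → ℕ) (V : (Fin d → ℤ) → ℂ) : Prop :=
  ∀ (n : Fin d → ℤ) (j : Fin d),
    V (fun i => n i + if i = j then (q i : ℤ) else 0) = V n

/-- `f` depends only on the coordinates in `S`. -/
def DependsOnlyOn {d : ℕ} (S : Set (Fin d)) (f : (Fin d → ℤ) → ℂ) : Prop :=
  ∀ n n' : Fin d → ℤ, (∀ j ∈ S, n j = n' j) → f n = f n'

/-- `(s,t)`-separability: `V = V_s + V_t` where `V_s` does not depend on coordinate `t`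
and `V_t` does not depend on coordinate `s`. -/
def SepPair {d : ℕ} (s t : Fin d) (V : (Fin d → ℤ) → ℂ) : Prop :=
  ∃ Vs Vt : (Fin d → ℤ) → ℂ,
    DependsOnlyOn ({t} : Set (Fin d))ᶜ Vs ∧
    DependsOnlyOn ({s} : Set (Fin d))ᶜ Vt ∧
    ∀ n, V n = Vs n + Vt n

/-! ### Auxiliary lemmas -/

section Aux

set_option linter.unnecessarySeqFocus false

lemma sum_exp_orth (q : ℕ) (hq : 0 < q) (r : ℤ) :
    ∑ k : Fin q, Complex.exp ((2 * Real.pi * Complex.I) * ((r : ℂ) * ((k : ℕ) : ℂ) / (q : ℂ)))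
      = if (q : ℤ) ∣ r then (q : ℂ) else 0 := by
  have hq0 : (q : ℂ) ≠ 0 := Nat.cast_ne_zero.2 hq.ne'
  set z : ℂ := Complex.exp ((2 * Real.pi * Complex.I) * ((r : ℂ) / (q : ℂ))) with hz
  have hzk : ∀ k : ℕ,
      Complex.exp ((2 * Real.pi * Complex.I) * ((r:ℂ) * (k:ℂ) / (q:ℂ))) = z ^ k := by
    intro k
    rw [hz, ← Complex.exp_nat_mul]
    ring_nf
  have hsum : ∑ k : Fin q, Complex.exp ((2 * Real.pi * Complex.I) * ((r : ℂ) * ((k:ℕ) : ℂ) / (q : ℂ)))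
      = ∑ k ∈ Finset.range q, z ^ k := by
    simp only [hzk]
    exact Fin.sum_univ_eq_sum_range (fun k => z ^ k) q
  rw [hsum]
  by_cases hdvd : (q : ℤ) ∣ r
  · obtain ⟨c, hc⟩ := hdvd
    have hz1 : z = 1 := by
      rw [hz]
      have h2 : (2 * Real.pi * Complex.I) * ((r : ℂ) / (q : ℂ)) = (c : ℤ) * (2 * Real.pi * Complex.I) := by
        have hr : (r : ℂ) = (q : ℂ) * (c : ℂ) := by exact_mod_cast congrArg (Int.cast : ℤ → ℂ) hc
        field_simp [hr]
        linear_combination hr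
      rw [h2, Complex.exp_int_mul_two_pi_mul_I]
    rw [if_pos ⟨c, hc⟩]
    simp [hz1]
  · rw [if_neg hdvd]
    have hpi : (2 * Real.pi * Complex.I) ≠ 0 :=
      mul_ne_zero (mul_ne_zero two_ne_zero (Complex.ofReal_ne_zero.2 Real.pi_ne_zero)) Complex.I_ne_zero
    have hzq : z ^ q = 1 := by
      rw [hz, ← Complex.exp_nat_mul]
      have h2 : (q : ℂ) * ((2 * Real.pi * Complex.I) * ((r : ℂ) / (q : ℂ))) = (r : ℤ) * (2 * Real.pi * Complex.I) := by
        field_simp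
      rw [h2, Complex.exp_int_mul_two_pi_mul_I]
    have hz1 : z ≠ 1 := by
      intro h
      rw [hz, Complex.exp_eq_one_iff] at h
      obtain ⟨n, hn⟩ := h
      apply hdvd
      refine ⟨n, ?_⟩
      have hdiv : (r : ℂ) / (q : ℂ) = (n : ℂ) := by
        apply mul_left_cancel₀ hpi
        rw [hn]; ring
      have : (r : ℂ) = (q : ℂ) * (n : ℂ) := by
        field_simp at hdiv
        linear_combination hdiv
      exact_mod_cast this
    rw [geom_sum_eq hz1, hzq]
    simp

lemma periodic_int_shift {d : ℕ} {q : Fin d → ℕ} {V : (Fin d → ℤ) → ℂ}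
    (hV : IsPeriodic q V) (j : Fin d) (c : ℤ) (n : Fin d → ℤ) :
    V (fun i => n i + if i = j then c * (q i : ℤ) else 0) = V n := by
  induction c using Int.induction_on with
  | zero => simp
  | succ k ih =>
    have h1 : (fun i => n i + if i = j then ((k : ℤ) + 1) * (q i : ℤ) else 0)
        = fun i => (fun i' => n i' + if i' = j then (k : ℤ) * (q i' : ℤ) else 0) i
            + if i = j then (q i : ℤ) else 0 := by
      funext i; by_cases h : i = j <;> simp [h] <;> ring
    rw [h1, hV _ j, ih]
  | pred k ih =>
    have h1 : (fun i => n i + if i = j then (-(k : ℤ)) * (q i : ℤ) else 0)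
        = fun i => (fun i' => n i' + if i' = j then (-(k : ℤ) - 1) * (q i' : ℤ) else 0) i
            + if i = j then (q i : ℤ) else 0 := by
      funext i; by_cases h : i = j <;> simp [h] <;> ring
    rw [← ih, h1, hV _ j]

lemma periodic_shift_all {d : ℕ} {q : Fin d → ℕ} {V : (Fin d → ℤ) → ℂ}
    (hV : IsPeriodic q V) (c : Fin d → ℤ) (n : Fin d → ℤ) :
    V (fun i => n i + c i * (q i : ℤ)) = V n := by
  suffices h : ∀ s : Finset (Fin d), ∀ m : Fin d → ℤ,
      V (fun i => m i + if i ∈ s then c i * (q i : ℤ) else 0) = V m by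
    have := h Finset.univ n
    simpa using this
  intro s
  induction s using Finset.induction_on with
  | empty => intro m; simp
  | @insert j s hj ih =>
    intro m
    have h1 : (fun i => m i + if i ∈ insert j s then c i * (q i : ℤ) else 0)
        = fun i => (fun i' => m i' + if i' = j then c j * (q i' : ℤ) else 0) i
            + if i ∈ s then c i * (q i : ℤ) else 0 := by
      funext i
      by_cases h : i = j
      · subst h; simp [hj]
      · by_cases h2 : i ∈ s <;> simp [h, h2]
    rw [h1, ih, periodic_int_shift hV]

lemma periodic_emod {d : ℕ} {q : Fin d → ℕ} {V : (Fin d → ℤ) → ℂ}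
    (hV : IsPeriodic q V) (m : Fin d → ℤ) :
    V (fun j => m j % (q j : ℤ)) = V m := by
  have h := periodic_shift_all hV (fun j => m j / (q j : ℤ)) (fun j => m j % (q j : ℤ))
  rw [← h]
  congr 1
  funext i
  exact Int.emod_add_ediv_mul (m i) (q i)

/-- The exponential `e^{2πi ∑ lⱼmⱼ/qⱼ}`. -/
noncomputable def Efun {d : ℕ} (q : Fin d → ℕ) (l : ∀ j, Fin (q j)) (m : Fin d → ℤ) : ℂ :=
  Complex.exp ((2 * Real.pi * Complex.I) * ∑ j, ((l j : ℕ) : ℂ) * (m j : ℂ) / (q j : ℂ))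

lemma sum_prod_orth {d : ℕ} (q : Fin d → ℕ) (hq : ∀ j, 0 < q j) (r : Fin d → ℤ) :
    ∑ l : ∀ j, Fin (q j), Complex.exp ((2 * Real.pi * Complex.I) *
        ∑ j, (r j : ℂ) * ((l j : ℕ) : ℂ) / (q j : ℂ))
      = ∏ j, (if (q j : ℤ) ∣ r j then ((q j : ℕ) : ℂ) else 0) := by
  symm
  calc ∏ j, (if (q j : ℤ) ∣ r j then ((q j : ℕ) : ℂ) else 0)
      = ∏ j, ∑ k : Fin (q j), Complex.exp ((2 * Real.pi * Complex.I) *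
          ((r j : ℂ) * ((k : ℕ) : ℂ) / (q j : ℂ))) := by
        exact Finset.prod_congr rfl fun j _ => (sum_exp_orth (q j) (hq j) (r j)).symm
    _ = ∑ l ∈ Fintype.piFinset (fun j => (Finset.univ : Finset (Fin (q j)))),
          ∏ j, Complex.exp ((2 * Real.pi * Complex.I) *
            ((r j : ℂ) * ((l j : ℕ) : ℂ) / (q j : ℂ))) := by
        exact Finset.prod_univ_sum _ _
    _ = ∑ l : ∀ j, Fin (q j), Complex.exp ((2 * Real.pi * Complex.I) *
          ∑ j, (r j : ℂ) * ((l j : ℕ) : ℂ) / (q j : ℂ)) := by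
        rw [Fintype.piFinset_univ]
        refine Finset.sum_congr rfl fun l _ => ?_
        rw [Finset.mul_sum, Complex.exp_sum]

lemma fourier_inversion {d : ℕ} (q : Fin d → ℕ) (hq : ∀ j, 0 < q j)
    (V : (Fin d → ℤ) → ℂ)
    (hVmod : ∀ m : Fin d → ℤ, V (fun j => m j % (q j : ℤ)) = V m) (m : Fin d → ℤ) :
    ∑ l : ∀ j, Fin (q j), dft q V (fun j => ((l j : ℕ) : ℤ)) * Efun q l m = V m := by
  have hQ0 : (∏ j, (q j : ℂ)) ≠ 0 :=
    Finset.prod_ne_zero_iff.2 fun j _ => Nat.cast_ne_zero.2 (hq j).ne'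
  have step1 : ∀ l : ∀ j, Fin (q j), dft q V (fun j => ((l j : ℕ) : ℤ)) * Efun q l m
      = (1 / ∏ j, (q j : ℂ)) * ∑ n : ∀ j, Fin (q j), V (fun j => ((n j : ℕ) : ℤ)) *
          Complex.exp ((2 * Real.pi * Complex.I) *
            ∑ j, ((m j - (n j : ℕ) : ℤ) : ℂ) * ((l j : ℕ) : ℂ) / (q j : ℂ)) := by
    intro l
    unfold dft Efun
    rw [mul_assoc, Finset.sum_mul]
    congr 1
    refine Finset.sum_congr rfl fun n _ => ?_
    rw [mul_assoc, ← Complex.exp_add]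
    congr 2
    have key : (∑ j, ((m j - (n j : ℕ) : ℤ) : ℂ) * ((l j : ℕ) : ℂ) / (q j : ℂ))
        = (∑ j, ((l j : ℕ) : ℂ) * ((m j : ℤ) : ℂ) / (q j : ℂ))
          - ∑ j, (((l j : ℕ) : ℤ) : ℂ) * ((n j : ℕ) : ℂ) / (q j : ℂ) := by
      rw [← Finset.sum_sub_distrib]
      refine Finset.sum_congr rfl fun j _ => ?_
      push_cast
      ring
    rw [key]
    ring
  rw [Finset.sum_congr rfl fun l _ => step1 l, ← Finset.mul_sum, Finset.sum_comm]
  have step2 : ∀ n : ∀ j, Fin (q j),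
      (∑ l : ∀ j, Fin (q j), V (fun j => ((n j : ℕ) : ℤ)) *
        Complex.exp ((2 * Real.pi * Complex.I) *
          ∑ j, ((m j - (n j : ℕ) : ℤ) : ℂ) * ((l j : ℕ) : ℂ) / (q j : ℂ)))
      = V (fun j => ((n j : ℕ) : ℤ)) *
          ∏ j, (if (q j : ℤ) ∣ (m j - (n j : ℕ)) then ((q j : ℕ) : ℂ) else 0) := by
    intro n
    rw [← Finset.mul_sum, sum_prod_orth q hq (fun j => m j - (n j : ℕ))]
  rw [Finset.sum_congr rfl fun n _ => step2 n]
  set n0 : ∀ j, Fin (q j) := fun j => ⟨(m j % (q j : ℤ)).toNat, by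
    have h1 : 0 ≤ m j % (q j : ℤ) := Int.emod_nonneg _ (by exact_mod_cast (hq j).ne')
    have h2 : m j % (q j : ℤ) < (q j : ℤ) := Int.emod_lt_of_pos _ (by exact_mod_cast hq j)
    omega⟩ with hn0
  have hn0v : ∀ j, ((n0 j : ℕ) : ℤ) = m j % (q j : ℤ) := by
    intro j
    simp only [hn0]
    have h1 : 0 ≤ m j % (q j : ℤ) := Int.emod_nonneg _ (by exact_mod_cast (hq j).ne')
    omega
  have hzero : ∀ n : ∀ j, Fin (q j), n ≠ n0 →
      V (fun j => ((n j : ℕ) : ℤ)) *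
        ∏ j, (if (q j : ℤ) ∣ (m j - (n j : ℕ)) then ((q j : ℕ) : ℂ) else 0) = 0 := by
    intro n hn
    obtain ⟨j, hj⟩ := Function.ne_iff.1 hn
    have hjne : ((n j : ℕ) : ℤ) ≠ ((n0 j : ℕ) : ℤ) := by
      intro h
      exact hj (Fin.ext (by exact_mod_cast h))
    have hnd : ¬ (q j : ℤ) ∣ (m j - (n j : ℕ)) := by
      intro hdvd
      have hd2 : (q j : ℤ) ∣ (m j - (m j % (q j : ℤ))) := Int.dvd_self_sub_of_emod_eq rfl
      have hd3 : (q j : ℤ) ∣ ((m j % (q j : ℤ)) - (n j : ℕ)) := by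
        have h := dvd_sub hdvd hd2
        rwa [show (m j - ((n j : ℕ) : ℤ)) - (m j - m j % (q j : ℤ))
            = m j % (q j : ℤ) - ((n j : ℕ) : ℤ) by ring] at h
      have habs : |(m j % (q j : ℤ)) - (n j : ℕ)| < (q j : ℤ) := by
        have h1 : 0 ≤ m j % (q j : ℤ) := Int.emod_nonneg _ (by exact_mod_cast (hq j).ne')
        have h2 : m j % (q j : ℤ) < (q j : ℤ) := Int.emod_lt_of_pos _ (by exact_mod_cast hq j)
        have h3 : ((n j : ℕ) : ℤ) < (q j : ℤ) := by exact_mod_cast (n j).isLt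
        have h4 : (0:ℤ) ≤ ((n j : ℕ) : ℤ) := by positivity
        rw [abs_lt]; omega
      have h0 := Int.eq_zero_of_abs_lt_dvd hd3 habs
      rw [← hn0v j] at h0
      omega
    rw [Finset.prod_eq_zero (Finset.mem_univ j) (by rw [if_neg hnd]), mul_zero]
  rw [Fintype.sum_eq_single n0 hzero]
  have hall : ∀ j, (q j : ℤ) ∣ (m j - (n0 j : ℕ)) := by
    intro j
    rw [hn0v j]
    exact Int.dvd_self_sub_of_emod_eq rfl
  rw [Finset.prod_congr rfl fun j _ => if_pos (hall j)]
  have hVn0 : V (fun j => ((n0 j : ℕ) : ℤ)) = V m := by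
    have h1 : (fun j => ((n0 j : ℕ) : ℤ)) = fun j => m j % (q j : ℤ) := funext hn0v
    rw [h1, hVmod]
  rw [hVn0]
  field_simp

lemma avg_exp {d : ℕ} (q : Fin d → ℕ) (hq : ∀ j, 0 < q j) (s : Fin d)
    (l : ∀ j, Fin (q j)) (m : Fin d → ℤ) :
    (1 / (q s : ℂ)) * ∑ k : Fin (q s), Efun q l (Function.update m s ((k : ℕ) : ℤ))
      = (if (l s : ℕ) = 0 then (1 : ℂ) else 0) * Efun q l m := by
  have hq0 : ((q s : ℕ) : ℂ) ≠ 0 := Nat.cast_ne_zero.2 (hq s).ne'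
  set c : ℂ := 2 * Real.pi * Complex.I with hc
  set T : ℂ := ∑ j ∈ Finset.univ.erase s, ((l j : ℕ) : ℂ) * (m j : ℂ) / (q j : ℂ) with hT
  have hsplit : ∀ x : ℤ, ∑ j, ((l j : ℕ) : ℂ) * ((Function.update m s x j : ℤ) : ℂ) / (q j : ℂ)
      = T + ((l s : ℕ) : ℂ) * ((x : ℤ) : ℂ) / (q s : ℂ) := by
    intro x
    rw [hT, ← Finset.sum_erase_add _ _ (Finset.mem_univ s)]
    congr 1
    · refine Finset.sum_congr rfl fun j hj => ?_
      rw [Function.update_of_ne (Finset.ne_of_mem_erase hj)]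
    · rw [Function.update_self]
  have hE : ∀ k : Fin (q s), Efun q l (Function.update m s ((k : ℕ) : ℤ))
      = Complex.exp (c * T) *
        Complex.exp (c * ((((l s : ℕ) : ℤ) : ℂ) * ((k : ℕ) : ℂ) / (q s : ℂ))) := by
    intro k
    rw [Efun, hsplit, mul_add, Complex.exp_add]
    norm_num
    rw [hc]
  rw [Finset.sum_congr rfl fun k _ => hE k, ← Finset.mul_sum, hc, sum_exp_orth (q s) (hq s)]
  have hdvd : (((q s : ℕ) : ℤ) ∣ ((l s : ℕ) : ℤ)) ↔ (l s : ℕ) = 0 := by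
    rw [Int.natCast_dvd_natCast]
    constructor
    · intro h; exact Nat.eq_zero_of_dvd_of_lt h (l s).isLt
    · intro h; simp [h]
  by_cases h0 : (l s : ℕ) = 0
  · rw [if_pos (hdvd.2 h0), if_pos h0, one_mul]
    have hEm : Efun q l m = Complex.exp ((2 * Real.pi * Complex.I) * T) := by
      rw [Efun, hT, ← Finset.sum_erase_add _ _ (Finset.mem_univ s), h0]
      norm_num
    rw [hEm]
    field_simp
  · rw [if_neg fun h => h0 (hdvd.1 h), if_neg h0]
    ring

/-- Averaging over coordinate `j`. -/
noncomputable def avgCoord {d : ℕ} (q : Fin d → ℕ) (j : Fin d)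
    (W : (Fin d → ℤ) → ℂ) : (Fin d → ℤ) → ℂ :=
  fun m => (1 / (q j : ℂ)) * ∑ k : Fin (q j), W (Function.update m j ((k : ℕ) : ℤ))

lemma avgCoord_dependsOnlyOn {d : ℕ} (q : Fin d → ℕ) (j : Fin d)
    (W : (Fin d → ℤ) → ℂ) :
    DependsOnlyOn ({j} : Set (Fin d))ᶜ (avgCoord q j W) := by
  intro n n' h
  have hupd : ∀ x : ℤ, Function.update n j x = Function.update n' j x := by
    intro x
    funext i
    by_cases hi : i = j
    · subst hi; simp
    · rw [Function.update_of_ne hi, Function.update_of_ne hi]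
      exact h i (by simp [hi])
  simp only [avgCoord, hupd]

lemma avgCoord_expand {d : ℕ} (q : Fin d → ℕ) (hq : ∀ j, 0 < q j) (j : Fin d)
    (a : (∀ i, Fin (q i)) → ℂ) (W : (Fin d → ℤ) → ℂ)
    (hW : ∀ m, W m = ∑ l : ∀ i, Fin (q i), a l * Efun q l m) (m : Fin d → ℤ) :
    avgCoord q j W m
      = ∑ l : ∀ i, Fin (q i), (if (l j : ℕ) = 0 then (1 : ℂ) else 0) * (a l * Efun q l m) := by
  unfold avgCoord
  simp only [hW]
  rw [Finset.sum_comm, Finset.mul_sum]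
  refine Finset.sum_congr rfl fun l _ => ?_
  rw [← Finset.mul_sum,
    show (1 / (q j : ℂ)) * (a l * ∑ k : Fin (q j), Efun q l (Function.update m j ((k : ℕ) : ℤ)))
      = a l * ((1 / (q j : ℂ)) * ∑ k : Fin (q j), Efun q l (Function.update m j ((k : ℕ) : ℤ)))
      from by ring,
    avg_exp q hq j l m]
  ring

end Aux

/-- The `if` direction: vanishing of `V̂(l)` for all `l` with `l_s ≠ 0` and `l_t ≠ 0`
implies `(s,t)`-separability of `V`. -/
theorem sepPair_of_dft_vanish {d : ℕ} (q : Fin d → ℕ) (hq : ∀ j, 0 < q j)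
    (V : (Fin d → ℤ) → ℂ) (hV : IsPeriodic q V) (s t : Fin d) (hst : s < t)
    (hvanish : ∀ l : ∀ j, Fin (q j), (l s : ℕ) ≠ 0 → (l t : ℕ) ≠ 0 →
      dft q V (fun j => ((l j : ℕ) : ℤ)) = 0) :
    ∃ Vs Vt : (Fin d → ℤ) → ℂ,
      DependsOnlyOn ({t} : Set (Fin d))ᶜ Vs ∧
      DependsOnlyOn ({s} : Set (Fin d))ᶜ Vt ∧
      ∀ n, V n = Vs n + Vt n := by
  classical
  set c : (∀ j, Fin (q j)) → ℂ := fun l => dft q V (fun j => ((l j : ℕ) : ℤ)) with hc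
  have hinv : ∀ m, V m = ∑ l : ∀ j, Fin (q j), c l * Efun q l m := fun m =>
    (fourier_inversion q hq V (periodic_emod hV) m).symm
  set Vs : (Fin d → ℤ) → ℂ := avgCoord q t V with hVsdef
  set Vt : (Fin d → ℤ) → ℂ := avgCoord q s (fun m => V m - Vs m) with hVtdef
  have hVs : ∀ m, Vs m = ∑ l : ∀ j, Fin (q j),
      (if (l t : ℕ) = 0 then (1 : ℂ) else 0) * (c l * Efun q l m) :=
    avgCoord_expand q hq t c V hinv
  have hW : ∀ m, V m - Vs m = ∑ l : ∀ j, Fin (q j),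
      ((1 - if (l t : ℕ) = 0 then (1 : ℂ) else 0) * c l) * Efun q l m := by
    intro m
    rw [hinv m, hVs m, ← Finset.sum_sub_distrib]
    refine Finset.sum_congr rfl fun l _ => ?_
    ring
  have hVt : ∀ m, Vt m = ∑ l : ∀ j, Fin (q j),
      (if (l s : ℕ) = 0 then (1 : ℂ) else 0) *
        (((1 - if (l t : ℕ) = 0 then (1 : ℂ) else 0) * c l) * Efun q l m) :=
    avgCoord_expand q hq s _ _ hW
  refine ⟨Vs, Vt, avgCoord_dependsOnlyOn q t V, avgCoord_dependsOnlyOn q s _, ?_⟩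
  intro n
  rw [hVs n, hVt n, hinv n, ← Finset.sum_add_distrib]
  refine Finset.sum_congr rfl fun l _ => ?_
  by_cases h1 : (l t : ℕ) = 0
  · simp [h1]
  · by_cases h2 : (l s : ℕ) = 0
    · simp [h1, h2]
    · have h3 : c l = 0 := hvanish l h2 h1
      simp [h1, h2, h3]
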